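/- Let n be an even integer and let B = [b_{ij}] be an n×n real constant row-sum matrix with constant row-sum λ₁ (Be = λ₁e). For each j, let β_j be the (n/2)-th largest element among the n−1 off-diagonal entries b_{1j}, …, b_{j−1,j}, b_{j+1,j}, …, b_{nj} of column j, and let F be the matrix whose j-th column is L_j − β_j e, where L_j is the j-th column of B. Then the Gershgorin region of the second type of F^T is a subset of the Gershgorin region of the second type of B^T, and every complex eigenvalue of B different from λ₁ lies in the Gershgorin region of the second type of F^T. -/

import Mathlib

open Matrix
open scoped ENNReal

/-- Non-increasing (descending) sort of a list of reals. -/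
noncomputable def sortDesc (l : List ℝ) : List ℝ := (l.insertionSort (· ≤ ·)).reverse

/-- Given the descending rearrangement `l` of `n` numbers, the sum of the largest
(about) half minus the sum of the smallest (about) half, skipping the middle
element when `n` is odd. -/
noncomputable def halfSumDiff (n : ℕ) (l : List ℝ) : ℝ :=
  if n % 2 = 1 then (l.take ((n - 1) / 2)).sum - (l.drop ((n + 1) / 2)).sum
  else (l.take (n / 2)).sum - (l.drop (n / 2)).sum

/-- Radius of the `i`-th Gershgorin disc of the second type of `M`, computed from
the `i`-th row of `M` with the diagonal entry replaced by `0`. -/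
noncomputable def secondTypeRadius {n : ℕ} (M : Matrix (Fin n) (Fin n) ℝ) (i : Fin n) : ℝ :=
  halfSumDiff n (sortDesc (List.ofFn fun j : Fin n => if j = i then 0 else M i j))

/-- The `i`-th Gershgorin disc of the second type of `M`. -/
noncomputable def secondTypeDisc {n : ℕ} (M : Matrix (Fin n) (Fin n) ℝ) (i : Fin n) : Set ℂ :=
  Metric.closedBall ((M i i : ℝ) : ℂ) (secondTypeRadius M i)

/-- The Gershgorin region of the second type of `M`. -/
noncomputable def secondTypeRegion {n : ℕ} (M : Matrix (Fin n) (Fin n) ℝ) : Set ℂ :=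
  ⋃ i : Fin n, secondTypeDisc M i

/-- `μ` is a (complex) eigenvalue of the real matrix `A`, i.e. a complex root of
its characteristic polynomial. -/
def IsEigenvalueC {n : ℕ} (A : Matrix (Fin n) (Fin n) ℝ) (μ : ℂ) : Prop :=
  ((A.map ((↑) : ℝ → ℂ)).charpoly).IsRoot μ

/-- The `k`-th largest element (1-indexed) among the `n - 1` off-diagonal entries of
column `j` of `B`. -/
noncomputable def kthLargestOffDiag {n : ℕ} (B : Matrix (Fin n) (Fin n) ℝ) (j : Fin n)
    (k : ℕ) : ℝ :=
  (sortDesc (((List.ofFn fun i : Fin n => B i j).eraseIdx j.val))).getD (k - 1) 0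

/-- The ℓ_p norm of a vector in ℝ^n. -/
noncomputable def lpNorm {n : ℕ} (p : ℝ≥0∞) (x : Fin n → ℝ) : ℝ :=
  @norm (PiLp p fun _ : Fin n => ℝ) _ ((WithLp.equiv p (∀ _ : Fin n, ℝ)).symm x)

/-- The seminorm-like quantity `τ_p(B)`: the supremum of `‖Bᵀ x‖_p` over all real
vectors `x` with `xᵀ e = 0` and `‖x‖_p = 1`. -/
noncomputable def tau {n : ℕ} (p : ℝ≥0∞) (B : Matrix (Fin n) (Fin n) ℝ) : ℝ :=
  sSup { t : ℝ | ∃ x : Fin n → ℝ, (∑ i, x i) = 0 ∧ lpNorm p x = 1 ∧ t = lpNorm p (Bᵀ *ᵥ x) }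

/-- The Ostrowski–Brauer set `Γ(M)` of a real square matrix `M`. -/
noncomputable def brauerSet {n : ℕ} (M : Matrix (Fin n) (Fin n) ℝ) : Set ℂ :=
  ⋃ (i : Fin n) (j : Fin n) (_ : i < j),
    { y : ℂ | ‖y - (M i i : ℝ)‖ * ‖y - (M j j : ℝ)‖ ≤
        (∑ k ∈ Finset.univ.filter fun k => k ≠ i, |M i k|) *
        (∑ k ∈ Finset.univ.filter fun k => k ≠ j, |M j k|) }

/-- `cs_j(A)` from Definition 2.3: sorted column sums difference. -/
noncomputable def csCol {n : ℕ} (A : Matrix (Fin n) (Fin n) ℝ) (j : Fin n) : ℝ :=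
  halfSumDiff n (sortDesc (List.ofFn fun i : Fin n => A i j))

/-! Row `i` of `Bᵀ` with its diagonal entry replaced by `0` consists of `0` and the `n - 1`
off-diagonal entries of column `i` of `B`, and `β_i`, the middle one of the latter, is a median of
these `n` numbers. For a list of even length, the second-type radius `halfSumDiff` equals
`∑ |x - t|` for every median `t`. Hence `r̂_i(Bᵀ) = |β_i| + ∑_{j ≠ i} |b_{ji} - β_i|`, while `0` is
a median of row `i` of `Fᵀ`, so `r̂_i(Fᵀ) = ∑_{j ≠ i} |f_{ji}|` is the classical Gershgorin radius.
The centres of the two discs differ by `β_i`, which gives the inclusion.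

A left eigenvector `v` of `B` for `μ ≠ λ₁` satisfies `∑ v = 0`, so `Fᵀ v = Bᵀ v - (∑ v) β = μ v`,
and the classical Gershgorin theorem for `Fᵀ` places `μ` in its second-type region. -/

open Function

-- `l.length / 2` rounds down: for lists of odd length this is weaker than being a median.
def IsMedian (l : List ℝ) (t : ℝ) : Prop :=
  l.length / 2 ≤ l.countP (fun x => t ≤ x) ∧ l.length / 2 ≤ l.countP (fun x => x ≤ t)

theorem List.Perm.isMedian_iff {l l' : List ℝ} (h : l.Perm l') {t : ℝ} :
    IsMedian l t ↔ IsMedian l' t := by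
  simp only [IsMedian, h.length_eq, h.countP_eq]

theorem IsMedian.map_sub_right {l : List ℝ} {t : ℝ} (h : IsMedian l t) (s : ℝ) :
    IsMedian (l.map (· - s)) (t - s) := by
  simpa [IsMedian, List.countP_map, Function.comp_def] using h

theorem List.forall_mem_take_of_le_countP {α : Type*} {R : α → α → Prop} {p : α → Bool}
    (hp : ∀ a b, R a b → p b → p a) {s : List α} (hs : s.Pairwise R) {m : ℕ}
    (hm : m ≤ s.countP p) : ∀ x ∈ s.take m, p x := by
  induction s generalizing m with
  | nil => simp
  | cons a s ih =>
    obtain _ | m := m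
    · simp
    have ha : p a := by
      by_contra ha
      have : (a :: s).countP p = 0 := List.countP_eq_zero.mpr fun b hb hpb => ha <| by
        rcases List.mem_cons.mp hb with rfl | hb
        · exact hpb
        · exact hp a b (List.rel_of_pairwise_cons hs hb) hpb
      omega
    rw [List.countP_cons_of_pos ha] at hm
    simpa [ha] using ih hs.of_cons (by omega)

theorem List.forall_mem_drop_of_le_countP {α : Type*} {R : α → α → Prop} {p : α → Bool}
    (hp : ∀ a b, R a b → p a → p b) {s : List α} (hs : s.Pairwise R) {m : ℕ}
    (hm : s.length - m ≤ s.countP p) : ∀ x ∈ s.drop m, p x := by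
  intro x hx
  have hms : m < s.length := by
    by_contra h
    simp [List.drop_eq_nil_of_le (not_lt.mp h)] at hx
  refine List.forall_mem_take_of_le_countP (R := fun a b => R b a) (fun a b hab => hp b a hab)
    (List.pairwise_reverse.mpr hs) (m := s.length - m) (by rwa [List.countP_reverse]) x ?_
  rwa [List.take_reverse, List.mem_reverse, Nat.sub_sub_self hms.le]

theorem sortDesc_perm (l : List ℝ) : (sortDesc l).Perm l :=
  (List.reverse_perm _).trans (List.perm_insertionSort _ l)

theorem sortDesc_pairwise (l : List ℝ) : (sortDesc l).Pairwise (· ≥ ·) :=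
  List.pairwise_reverse.mpr (List.pairwise_insertionSort _ l)

theorem halfSumDiff_sortDesc_eq_sum_abs_sub {l : List ℝ} {t : ℝ} (hl : Even l.length)
    (ht : IsMedian l t) :
    halfSumDiff l.length (sortDesc l) = (l.map fun x => |x - t|).sum := by
  set s := sortDesc l
  set m := l.length / 2
  have hperm : s.Perm l := sortDesc_perm l
  have hs : s.Pairwise (· ≥ ·) := sortDesc_pairwise l
  have hlen : s.length = m + m := by rw [hperm.length_eq]; obtain ⟨r, hr⟩ := hl; omega
  have hupper : ∀ x ∈ s.take m, t ≤ x := by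
    simpa using List.forall_mem_take_of_le_countP (p := fun x => decide (t ≤ x))
      (fun a b hab hb => by simpa using le_trans (by simpa using hb) hab) hs
      (by rw [hperm.countP_eq]; exact ht.1)
  have hlower : ∀ x ∈ s.drop m, x ≤ t := by
    simpa using List.forall_mem_drop_of_le_countP (p := fun x => decide (x ≤ t))
      (fun a b hab ha => by simpa using le_trans hab (by simpa using ha)) hs
      (by rw [hperm.countP_eq, hlen]; simpa using ht.2)
  calc halfSumDiff l.length s = (s.take m).sum - (s.drop m).sum := by
        rw [halfSumDiff, if_neg (by obtain ⟨r, hr⟩ := hl; omega)]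
    _ = ((s.take m).map fun x => x - t).sum + ((s.drop m).map fun x => t - x).sum := by
        have hsub (L : List ℝ) : (L.map fun x => x - t).sum = L.sum - L.length * t := by
          simp [sub_eq_add_neg, List.sum_map_add]
        have hsub' (L : List ℝ) : (L.map fun x => t - x).sum = L.length * t - L.sum := by
          simp [sub_eq_add_neg, List.sum_map_add, List.sum_neg]
        rw [hsub, hsub', List.length_take, List.length_drop, hlen, min_eq_left (by omega),
          Nat.add_sub_cancel]
        ring
    _ = ((s.take m).map fun x => |x - t|).sum + ((s.drop m).map fun x => |x - t|).sum := by
        congr 2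
        · exact List.map_congr_left fun x hx =>
            (abs_of_nonneg (sub_nonneg.mpr (hupper x hx))).symm
        · exact List.map_congr_left fun x hx =>
            (abs_sub_comm x t ▸ abs_of_nonneg (sub_nonneg.mpr (hlower x hx))).symm
    _ = (l.map fun x => |x - t|).sum := by
        rw [← List.sum_append, ← List.map_append, List.take_append_drop, (hperm.map _).sum_eq]

theorem le_countP_le_sortDesc_getElem (l : List ℝ) {k : ℕ} (hk : k < (sortDesc l).length) :
    k + 1 ≤ l.countP (fun x => (sortDesc l)[k] ≤ x) := by
  have hpair := List.pairwise_iff_getElem.mp (sortDesc_pairwise l)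
  have hge : ∀ x ∈ (sortDesc l).take (k + 1), (sortDesc l)[k] ≤ x := by
    intro x hx
    obtain ⟨j, hj, rfl⟩ := List.mem_iff_getElem.mp hx
    rw [List.getElem_take]
    rcases (show j < k ∨ j = k by simp at hj; omega) with h | rfl
    exacts [hpair _ _ _ _ h, le_rfl]
  calc k + 1 = ((sortDesc l).take (k + 1)).countP (fun x => (sortDesc l)[k] ≤ x) := by
        rw [List.countP_eq_length.mpr (by simpa using hge)]; simp; omega
    _ ≤ (sortDesc l).countP (fun x => (sortDesc l)[k] ≤ x) := (List.take_sublist _ _).countP_le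
    _ = l.countP (fun x => (sortDesc l)[k] ≤ x) := (sortDesc_perm l).countP_eq _

theorem le_countP_sortDesc_getElem_le (l : List ℝ) {k : ℕ} (hk : k < (sortDesc l).length) :
    l.length - k ≤ l.countP (fun x => x ≤ (sortDesc l)[k]) := by
  have hpair := List.pairwise_iff_getElem.mp (sortDesc_pairwise l)
  have hle : ∀ x ∈ (sortDesc l).drop k, x ≤ (sortDesc l)[k] := by
    intro x hx
    obtain ⟨j, hj, rfl⟩ := List.mem_iff_getElem.mp hx
    rw [List.getElem_drop]
    rcases Nat.eq_zero_or_pos j with rfl | h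
    exacts [le_rfl, hpair _ _ _ _ (by omega)]
  calc l.length - k = ((sortDesc l).drop k).countP (fun x => x ≤ (sortDesc l)[k]) := by
        rw [List.countP_eq_length.mpr (by simpa using hle)]; simp [(sortDesc_perm l).length_eq]
    _ ≤ (sortDesc l).countP (fun x => x ≤ (sortDesc l)[k]) := (List.drop_sublist _ _).countP_le
    _ = l.countP (fun x => x ≤ (sortDesc l)[k]) := (sortDesc_perm l).countP_eq _

theorem isMedian_cons_sortDesc_getD {l : List ℝ} (hl : Odd l.length) (a : ℝ) :
    IsMedian (a :: l) ((sortDesc l).getD (l.length / 2) 0) := by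
  have hlen := (sortDesc_perm l).length_eq
  obtain ⟨r, hr⟩ := hl
  have hk : l.length / 2 < (sortDesc l).length := by omega
  rw [List.getD_eq_getElem _ _ hk]
  have hge := le_countP_le_sortDesc_getElem l hk
  have hle := le_countP_sortDesc_getElem_le l hk
  constructor <;> simp only [List.countP_cons, List.length_cons] <;> omega

theorem List.ofFn_update_perm {α : Type*} {n : ℕ} (g : Fin n → α) (i : Fin n) (a : α) :
    (List.ofFn (update g i a)).Perm (a :: (List.ofFn g).eraseIdx i) := by
  have hset : List.ofFn (update g i a) = (List.ofFn g).set i a :=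
    List.ext_getElem (by simp) fun k _ _ => by
      simp [List.getElem_set, update_apply, Fin.ext_iff, eq_comm]
  rw [hset]
  exact List.set_perm_cons_eraseIdx (by simp) a

theorem halfSumDiff_sortDesc_ofFn_update_eq {n : ℕ} (hn : Even n) (g : Fin n → ℝ) (i : Fin n)
    {t : ℝ} (ht : IsMedian (0 :: (List.ofFn g).eraseIdx i) t) :
    halfSumDiff n (sortDesc (List.ofFn (update g i 0))) =
      |t| + ∑ j ∈ Finset.univ.erase i, |g j - t| := by
  have h := halfSumDiff_sortDesc_eq_sum_abs_sub (l := List.ofFn (update g i 0))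
    (by simpa using hn) ((List.ofFn_update_perm g i 0).isMedian_iff.mpr ht)
  rw [List.length_ofFn] at h
  rw [h, List.map_ofFn, List.sum_ofFn, ← Finset.add_sum_erase _ _ (Finset.mem_univ i)]
  simp only [Function.comp_apply, update_self, zero_sub, abs_neg]
  congr 1
  exact Finset.sum_congr rfl fun j hj => by rw [update_of_ne (Finset.ne_of_mem_erase hj)]

theorem secondTypeRadius_eq_of_isMedian {n : ℕ} (hn : Even n) (M : Matrix (Fin n) (Fin n) ℝ)
    (i : Fin n) {t : ℝ} (ht : IsMedian (0 :: (List.ofFn fun j => M i j).eraseIdx i) t) :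
    secondTypeRadius M i = |t| + ∑ j ∈ Finset.univ.erase i, |M i j - t| := by
  have hrow : (fun j => if j = i then 0 else M i j) = update (fun j => M i j) i 0 :=
    funext fun j => (update_apply _ i 0 j).symm
  rw [secondTypeRadius, hrow]
  exact halfSumDiff_sortDesc_ofFn_update_eq hn _ i ht

theorem isMedian_cons_kthLargestOffDiag {n : ℕ} (hn : Even n) (B : Matrix (Fin n) (Fin n) ℝ)
    (i : Fin n) (a : ℝ) :
    IsMedian (a :: (List.ofFn fun j => B j i).eraseIdx i) (kthLargestOffDiag B i (n / 2)) := by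
  have hlen : ((List.ofFn fun j => B j i).eraseIdx i).length = n - 1 := by
    rw [List.length_eraseIdx_of_lt (by simp), List.length_ofFn]
  have hodd : Odd ((List.ofFn fun j => B j i).eraseIdx i).length := by
    rw [hlen]; obtain ⟨r, hr⟩ := hn; have := i.pos; exact ⟨r - 1, by omega⟩
  have h := isMedian_cons_sortDesc_getD hodd a
  rwa [hlen, show (n - 1) / 2 = n / 2 - 1 by obtain ⟨r, hr⟩ := hn; omega] at h

theorem secondTypeRadius_shift_transpose_eq_sum_abs {n : ℕ} (hn : Even n)
    (B F : Matrix (Fin n) (Fin n) ℝ) (hF : ∀ i j, F i j = B i j - kthLargestOffDiag B j (n / 2))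
    (i : Fin n) :
    secondTypeRadius Fᵀ i = ∑ j ∈ Finset.univ.erase i, |F j i| := by
  set β := kthLargestOffDiag B i (n / 2)
  have hcol : (fun j => F j i) = (fun x => x - β) ∘ fun j => B j i := funext fun j => hF j i
  have ht : IsMedian (0 :: (List.ofFn fun j => F j i).eraseIdx i) 0 := by
    have h := (isMedian_cons_kthLargestOffDiag hn B i β).map_sub_right β
    rwa [List.map_cons, sub_self, ← List.eraseIdx_map, List.map_ofFn, ← hcol] at h
  simpa using secondTypeRadius_eq_of_isMedian hn Fᵀ i ht

theorem secondTypeRadius_transpose_eq_abs_add {n : ℕ} (hn : Even n)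
    (B F : Matrix (Fin n) (Fin n) ℝ) (hF : ∀ i j, F i j = B i j - kthLargestOffDiag B j (n / 2))
    (i : Fin n) :
    secondTypeRadius Bᵀ i = |kthLargestOffDiag B i (n / 2)| + secondTypeRadius Fᵀ i := by
  rw [secondTypeRadius_eq_of_isMedian hn Bᵀ i (isMedian_cons_kthLargestOffDiag hn B i 0),
    secondTypeRadius_shift_transpose_eq_sum_abs hn B F hF]
  simp [hF]

theorem secondTypeDisc_shift_transpose_subset {n : ℕ} (hn : Even n)
    (B F : Matrix (Fin n) (Fin n) ℝ) (hF : ∀ i j, F i j = B i j - kthLargestOffDiag B j (n / 2))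
    (i : Fin n) :
    secondTypeDisc Fᵀ i ⊆ secondTypeDisc Bᵀ i := by
  intro z hz
  rw [secondTypeDisc, Metric.mem_closedBall] at hz ⊢
  calc dist z (Bᵀ i i : ℂ) ≤ dist z (Fᵀ i i : ℂ) + dist (Fᵀ i i : ℂ) (Bᵀ i i : ℂ) :=
        dist_triangle _ _ _
    _ ≤ secondTypeRadius Fᵀ i + |kthLargestOffDiag B i (n / 2)| := by
        gcongr
        simp [hF, Complex.dist_eq, ← Complex.ofReal_sub]
    _ = secondTypeRadius Bᵀ i := by rw [secondTypeRadius_transpose_eq_abs_add hn B F hF]; ring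

theorem exists_transpose_mulVec_eq_smul_of_isEigenvalueC {n : ℕ} {A : Matrix (Fin n) (Fin n) ℝ}
    {μ : ℂ} (h : IsEigenvalueC A μ) :
    ∃ v ≠ 0, (A.map ((↑) : ℝ → ℂ))ᵀ *ᵥ v = μ • v := by
  have hroot : (toLin' (A.map ((↑) : ℝ → ℂ))ᵀ).charpoly.IsRoot μ := by
    rwa [charpoly_toLin', charpoly_transpose]
  obtain ⟨v, hv⟩ :=
    ((Module.End.hasEigenvalue_iff_isRoot_charpoly _ _).mpr hroot).exists_hasEigenvector
  exact ⟨v, hv.2, by simpa [toLin'_apply] using hv.apply_eq_smul⟩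

theorem sum_eq_zero_of_transpose_mulVec_eq_smul {K ι : Type*} [Field K] [Fintype ι]
    {A : Matrix ι ι K} {r μ : K} (hA : A *ᵥ 1 = r • 1) {v : ι → K} (hv : Aᵀ *ᵥ v = μ • v)
    (hμ : μ ≠ r) : ∑ i, v i = 0 := by
  have h : μ * ∑ i, v i = r * ∑ i, v i := calc
    μ * ∑ i, v i = 1 ⬝ᵥ (Aᵀ *ᵥ v) := by rw [hv, dotProduct_smul, one_dotProduct, smul_eq_mul]
    _ = (A *ᵥ 1) ⬝ᵥ v := by rw [dotProduct_mulVec, vecMul_transpose]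
    _ = r * ∑ i, v i := by rw [hA, smul_dotProduct, one_dotProduct, smul_eq_mul]
  exact (mul_eq_mul_right_iff.mp h).resolve_left hμ

theorem transpose_mulVec_of_sub_col {R ι : Type*} [CommRing R] [Fintype ι] {A C : Matrix ι ι R}
    (c : ι → R) (hC : ∀ i j, C i j = A i j - c j) (v : ι → R) :
    Cᵀ *ᵥ v = Aᵀ *ᵥ v - (∑ i, v i) • c := by
  ext j
  simp [mulVec, dotProduct, hC, mul_sub, Finset.sum_sub_distrib, Finset.mul_sum, mul_comm]

/-- Theorem 4: for `n` even and `B` constant row-sum with row sum `λ₁`,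
with `F` obtained by subtracting from each column `j` of `B` the `(n/2)`-th largest
off-diagonal entry of that column, the Gershgorin region of the second type of `Fᵀ`
is contained in that of `Bᵀ` and contains every eigenvalue of `B` other than `λ₁`. -/
theorem stmt4 {n : ℕ} (hn : Even n) (B : Matrix (Fin n) (Fin n) ℝ)
    (lam1 : ℝ) (hB : B *ᵥ (1 : Fin n → ℝ) = lam1 • (1 : Fin n → ℝ))
    (F : Matrix (Fin n) (Fin n) ℝ)
    (hF : ∀ i j, F i j = B i j - kthLargestOffDiag B j (n / 2)) :
    secondTypeRegion Fᵀ ⊆ secondTypeRegion Bᵀ ∧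
      ∀ mu : ℂ, IsEigenvalueC B mu → mu ≠ (lam1 : ℂ) → mu ∈ secondTypeRegion Fᵀ := by
  refine ⟨Set.iUnion_mono fun i => secondTypeDisc_shift_transpose_subset hn B F hF i, ?_⟩
  intro mu hmu hne
  obtain ⟨v, hv0, hv⟩ := exists_transpose_mulVec_eq_smul_of_isEigenvalueC hmu
  have hBC : B.map ((↑) : ℝ → ℂ) *ᵥ 1 = (lam1 : ℂ) • 1 := by
    ext i; simpa [mulVec, dotProduct] using congrArg ((↑) : ℝ → ℂ) (congrFun hB i)
  have hsum := sum_eq_zero_of_transpose_mulVec_eq_smul hBC hv hne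
  have hFv : (F.map ((↑) : ℝ → ℂ))ᵀ *ᵥ v = mu • v := by
    rw [transpose_mulVec_of_sub_col (A := B.map (↑))
      (fun j => (kthLargestOffDiag B j (n / 2) : ℂ)) (fun i j => by simp [hF]) v,
      hsum, zero_smul, sub_zero, hv]
  obtain ⟨k, hk⟩ := eigenvalue_mem_ball (Module.End.hasEigenvalue_of_hasEigenvector
    (x := v) ⟨Module.End.mem_eigenspace_iff.mpr (by rwa [toLin'_apply]), hv0⟩)
  refine Set.mem_iUnion.mpr ⟨k, ?_⟩
  simpa [secondTypeDisc, secondTypeRadius_shift_transpose_eq_sum_abs hn B F hF k] using hk
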